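/- arXiv:0908.3211 — 2 statements merged into one kernel-verified Lean document; each statement's English description precedes it below -/
import Mathlib

section
/- For every x > 0, the absolute value of the Fresnel-type tail integral ∫_x^∞ e^{iu²} du is bounded by C/(1+x) for some absolute constant C. -/
/-!
Since `d/du (e^{iu²} / (2iu)) = e^{iu²} - e^{iu²} / (2iu²)`, integration by parts writes
`∫_x^R e^{iu²} du` as a boundary term of size at most `1/(2x) + 1/(2R)` plus the integral of
`e^{iu²} / (2iu²)`, which converges absolutely on `(x, ∞)` with `∫_x^∞ du / (2u²) = 1/(2x)`.
So the tail exists and has norm at most `1/x`; for `x < 1` the segment `[x, 1]` adds at most `1`.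
-/

open MeasureTheory Complex Filter Set Topology

section

variable {E : Type*} [NormedAddCommGroup E] [NormedSpace ℝ E]

theorem tendsto_intervalIntegral_of_hasDerivAt_add [CompleteSpace E] {f F g : ℝ → E} {a : ℝ}
    (hf : Continuous f)
    (hF : ∀ u ∈ Ici a, HasDerivAt F (f u - g u) u) (hF_lim : Tendsto F atTop (𝓝 0))
    (hg : IntegrableOn g (Ioi a)) :
    Tendsto (fun R => ∫ u in a..R, f u) atTop (𝓝 ((∫ u in Ioi a, g u) - F a)) := by
  have hlim := (hF_lim.sub_const (F a)).add (intervalIntegral_tendsto_integral_Ioi a hg tendsto_id)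
  rw [zero_sub, neg_add_eq_sub] at hlim
  refine hlim.congr' ?_
  filter_upwards [eventually_ge_atTop a] with R hR
  have hg_int : IntervalIntegrable g volume a R :=
    (intervalIntegrable_iff_integrableOn_Ioc_of_le hR).2 (hg.mono_set Ioc_subset_Ioi_self)
  have hFTC : ∫ u in a..R, (f u - g u) = F R - F a :=
    intervalIntegral.integral_eq_sub_of_hasDerivAt
      (fun u hu => hF u (by rw [uIcc_of_le hR] at hu; exact hu.1))
      ((hf.intervalIntegrable a R).sub hg_int)
  rw [id, ← hFTC, intervalIntegral.integral_sub (hf.intervalIntegrable a R) hg_int, sub_add_cancel]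

theorem tendsto_intervalIntegral_add_adjacent {f : ℝ → E} {L : E} (hf : Continuous f) (a b : ℝ)
    (hL : Tendsto (fun R => ∫ u in b..R, f u) atTop (𝓝 L)) :
    Tendsto (fun R => ∫ u in a..R, f u) atTop (𝓝 ((∫ u in a..b, f u) + L)) :=
  (tendsto_const_nhds.add hL).congr fun R =>
    intervalIntegral.integral_add_adjacent_intervals (hf.intervalIntegrable a b)
      (hf.intervalIntegrable b R)

end

theorem norm_cexp_I_mul_sq (u : ℝ) : ‖cexp (I * u ^ 2)‖ = 1 := by
  rw [← ofReal_pow, norm_exp_I_mul_ofReal]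

theorem hasDerivAt_cexp_I_mul_sq (u : ℝ) :
    HasDerivAt (fun u : ℝ => cexp (I * u ^ 2)) (2 * I * u * cexp (I * u ^ 2)) u := by
  have := ((hasDerivAt_pow 2 (u : ℂ)).const_mul I).cexp.comp_ofReal
  convert this using 1
  push_cast
  ring

theorem hasDerivAt_cexp_I_mul_sq_div {u : ℝ} (hu : u ≠ 0) :
    HasDerivAt (fun u : ℝ => cexp (I * u ^ 2) / (2 * I * u))
      (cexp (I * u ^ 2) - cexp (I * u ^ 2) / (2 * I * u ^ 2)) u := by
  have hu' : (u : ℂ) ≠ 0 := ofReal_ne_zero.2 hu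
  have hden : HasDerivAt (fun u : ℝ => 2 * I * (u : ℂ)) (2 * I) u := by
    simpa using (hasDerivAt_id u).ofReal_comp.const_mul (2 * I)
  refine ((hasDerivAt_cexp_I_mul_sq u).div hden (by simp [hu', I_ne_zero])).congr_deriv ?_
  field_simp

theorem norm_cexp_I_mul_sq_div {u : ℝ} (hu : 0 < u) :
    ‖cexp (I * u ^ 2) / (2 * I * u)‖ = (2 * u)⁻¹ := by
  simp [norm_cexp_I_mul_sq, abs_of_pos hu]

theorem norm_cexp_I_mul_sq_div_sq (u : ℝ) :
    ‖cexp (I * u ^ 2) / (2 * I * u ^ 2)‖ = (2 * u ^ 2)⁻¹ := by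
  simp [norm_cexp_I_mul_sq]

theorem tendsto_two_mul_inv_atTop_zero : Tendsto (fun u : ℝ => (2 * u)⁻¹) atTop (𝓝 0) :=
  tendsto_inv_atTop_zero.comp (tendsto_id.const_mul_atTop two_pos)

theorem exists_tendsto_intervalIntegral_cexp_I_mul_sq {x : ℝ} (hx : 0 < x) :
    ∃ L : ℂ, Tendsto (fun R => ∫ u in x..R, cexp (I * u ^ 2)) atTop (𝓝 L) ∧ ‖L‖ ≤ x⁻¹ := by
  have hmaj_deriv : ∀ u ∈ Ici x, HasDerivAt (fun u : ℝ => -(2 * u)⁻¹) (2 * u ^ 2)⁻¹ u := by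
    intro u hu
    have hu0 : u ≠ 0 := (hx.trans_le hu).ne'
    refine (((hasDerivAt_id' u).const_mul 2).inv (by simpa using hu0)).neg.congr_deriv ?_
    field_simp
  have hmaj_nonneg : ∀ u ∈ Ioi x, 0 ≤ (2 * u ^ 2)⁻¹ := fun u _ => by positivity
  have hmaj_lim : Tendsto (fun u : ℝ => -(2 * u)⁻¹) atTop (𝓝 0) := by
    simpa using tendsto_two_mul_inv_atTop_zero.neg
  have hmaj_int := integrableOn_Ioi_deriv_of_nonneg' hmaj_deriv hmaj_nonneg hmaj_lim
  have hmaj_integral := integral_Ioi_of_hasDerivAt_of_nonneg' hmaj_deriv hmaj_nonneg hmaj_lim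
  have hg_norm : ∀ᵐ u : ℝ ∂volume.restrict (Ioi x),
      ‖cexp (I * u ^ 2) / (2 * I * u ^ 2)‖ = (2 * u ^ 2)⁻¹ :=
    ae_of_all _ norm_cexp_I_mul_sq_div_sq
  have hg_int : IntegrableOn (fun u : ℝ => cexp (I * u ^ 2) / (2 * I * u ^ 2)) (Ioi x) :=
    hmaj_int.mono' (Measurable.aestronglyMeasurable (by fun_prop)) (hg_norm.mono fun _ h => h.le)
  have hF_lim : Tendsto (fun u : ℝ => cexp (I * u ^ 2) / (2 * I * u)) atTop (𝓝 0) := by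
    refine squeeze_zero_norm' ?_ tendsto_two_mul_inv_atTop_zero
    filter_upwards [eventually_gt_atTop 0] with u hu
    exact (norm_cexp_I_mul_sq_div hu).le
  refine ⟨_, tendsto_intervalIntegral_of_hasDerivAt_add (by fun_prop)
    (fun u hu => hasDerivAt_cexp_I_mul_sq_div (hx.trans_le hu).ne') hF_lim hg_int, ?_⟩
  calc _ ≤ ‖∫ u in Ioi x, cexp (I * u ^ 2) / (2 * I * u ^ 2)‖
        + ‖cexp (I * x ^ 2) / (2 * I * x)‖ := norm_sub_le _ _
    _ ≤ (2 * x)⁻¹ + (2 * x)⁻¹ := by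
      gcongr
      · refine (norm_integral_le_of_norm_le hmaj_int (hg_norm.mono fun _ h => h.le)).trans_eq ?_
        rw [hmaj_integral, zero_sub, neg_neg]
      · exact (norm_cexp_I_mul_sq_div hx).le
    _ = x⁻¹ := by field_simp; ring

/-- For every `x > 0`, the Fresnel-type tail integral `∫_x^∞ e^{iu²} du`
(understood as the improper Riemann integral) exists and its absolute value
is bounded by `C / (1 + x)` for an absolute constant `C`. -/
theorem fresnel_tail_bound :
    ∃ C : ℝ, 0 < C ∧ ∀ x : ℝ, 0 < x →
      ∃ L : ℂ,
        Tendsto (fun R : ℝ => ∫ u in x..R, Complex.exp (Complex.I * u ^ 2))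
          atTop (nhds L) ∧
        ‖L‖ ≤ C / (1 + x) := by
  refine ⟨4, by norm_num, fun x hx => ?_⟩
  rcases le_or_gt 1 x with h1x | hx1
  · obtain ⟨L, hL, hLx⟩ := exists_tendsto_intervalIntegral_cexp_I_mul_sq hx
    refine ⟨L, hL, hLx.trans ?_⟩
    rw [inv_eq_one_div, div_le_div_iff₀ hx (by linarith)]
    linarith
  · obtain ⟨L, hL, hL1⟩ := exists_tendsto_intervalIntegral_cexp_I_mul_sq one_pos
    have hseg : ‖∫ u in x..1, cexp (I * u ^ 2)‖ ≤ 1 := by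
      refine (intervalIntegral.norm_integral_le_of_norm_le_const
        fun u _ => (norm_cexp_I_mul_sq u).le).trans ?_
      rw [one_mul, abs_of_pos (by linarith)]
      linarith
    refine ⟨_, tendsto_intervalIntegral_add_adjacent (by fun_prop) x 1 hL, ?_⟩
    calc _ ≤ (1 : ℝ) + 1 := (norm_add_le _ _).trans (add_le_add hseg (by simpa using hL1))
      _ ≤ 4 / (1 + x) := by
        rw [le_div_iff₀ (by linarith)]
        linarith
end

section
/- Suppose q : [0,∞) → ℝ satisfies ∫_0^∞ q(x)² ln²(2+x) dx < ∞, and let q₁(x) = x^{−1} ∫_0^x |q(u)| du. Then (ln² T)/T · (∫_0^{CT} |q(u)| du)² → 0 as T → ∞ for any fixed C > 0; in particular (ln² T) ∫_{c T}^{C T} q₁(x)² dx → 0 as T → ∞. -/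
/-!
Put `f(x) = q(x) log(2+x) ∈ L²(0,∞)`. By Cauchy–Schwarz, on an interval of length `ℓ` where
`log(2+x) ≥ w₀` we have `∫ |q| ≤ √ℓ ‖f‖₂ / w₀`. Split `∫_0^{CT} |q|` at `√T`: the piece over
`[0, √T]` is `O(T^{1/4})`, negligible against `√T / ln T`; on `[√T, CT]` the weight is at least
`½ ln T`, so that piece is at most `2 √(CT) / ln T` times the `L²` norm of `f` beyond `√T`, which
tends to `0`. The Cesàro estimate follows from `q₁ ≤ (cT)⁻¹ ∫_0^{CT} |q|` on `(cT, CT]`.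
-/

open MeasureTheory Filter Real Set Topology

theorem abs_le_abs_mul_div_of_le {a b b₀ : ℝ} (hb₀ : 0 < b₀) (hb : b₀ ≤ b) :
    |a| ≤ |a * b| / b₀ := by
  rw [le_div_iff₀ hb₀, abs_mul]
  exact mul_le_mul_of_nonneg_left (hb.trans (le_abs_self b)) (abs_nonneg a)

section CauchySchwarz
variable {α : Type*} [MeasurableSpace α] {μ : Measure α} [IsFiniteMeasure μ]

theorem sq_integral_le_measureReal_mul_integral_sq {f : α → ℝ}
    (hf : MemLp f 2 μ) : (∫ x, f x ∂μ) ^ 2 ≤ μ.real univ * ∫ x, f x ^ 2 ∂μ := by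
  rcases eq_zero_or_neZero μ with rfl | _
  · simp
  have hμ : 0 < μ.real univ := measureReal_univ_pos
  have jensen : (⨍ x, f x ∂μ) ^ 2 ≤ ⨍ x, f x ^ 2 ∂μ :=
    (even_two.convexOn_pow).map_average_le (continuous_pow 2).continuousOn isClosed_univ
      (ae_of_all _ fun _ => mem_univ _) (hf.integrable one_le_two) hf.integrable_sq
  rw [average_eq, average_eq, smul_eq_mul, smul_eq_mul, mul_pow] at jensen
  have := mul_le_mul_of_nonneg_left jensen (sq_nonneg (μ.real univ))
  field_simp at this
  linarith

variable {q w : α → ℝ} {w₀ : ℝ}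

theorem integrable_of_memLp_mul_of_le (hq : AEStronglyMeasurable q μ) (hw₀ : 0 < w₀)
    (hw : ∀ᵐ x ∂μ, w₀ ≤ w x) (hqw : MemLp (fun x => q x * w x) 2 μ) : Integrable q μ := by
  refine Integrable.mono' ((hqw.integrable one_le_two).abs.div_const w₀) hq ?_
  filter_upwards [hw] with x hx
  exact abs_le_abs_mul_div_of_le hw₀ hx

theorem sq_integral_abs_le_of_le_weight (hw₀ : 0 < w₀) (hw : ∀ᵐ x ∂μ, w₀ ≤ w x)
    (hqw : MemLp (fun x => q x * w x) 2 μ) :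
    (∫ x, |q x| ∂μ) ^ 2 ≤ μ.real univ / w₀ ^ 2 * ∫ x, (q x * w x) ^ 2 ∂μ := by
  have h_abs : ∫ x, |q x| ∂μ ≤ (∫ x, |q x * w x| ∂μ) / w₀ := by
    rw [← integral_div]
    exact integral_mono_of_nonneg (ae_of_all _ fun x => abs_nonneg _)
      ((hqw.integrable one_le_two).abs.div_const w₀)
      (hw.mono fun x hx => abs_le_abs_mul_div_of_le hw₀ hx)
  have h_cs : (∫ x, |q x * w x| ∂μ) ^ 2 ≤ μ.real univ * ∫ x, (q x * w x) ^ 2 ∂μ := by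
    simpa only [Pi.abs_apply, sq_abs] using sq_integral_le_measureReal_mul_integral_sq hqw.abs
  calc (∫ x, |q x| ∂μ) ^ 2 ≤ ((∫ x, |q x * w x| ∂μ) / w₀) ^ 2 :=
        pow_le_pow_left₀ (integral_nonneg fun x => abs_nonneg _) h_abs 2
    _ ≤ μ.real univ / w₀ ^ 2 * ∫ x, (q x * w x) ^ 2 ∂μ := by
        rw [div_pow, div_mul_eq_mul_div]
        gcongr

end CauchySchwarz

theorem tendsto_setIntegral_Ioi_atTop {f : ℝ → ℝ} {a : ℝ} (hf : IntegrableOn f (Ioi a)) :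
    Tendsto (fun s => ∫ x in Ioi s, f x) atTop (𝓝 0) := by
  have hempty : ⋂ s : ℝ, Ioi s = ∅ :=
    eq_empty_of_forall_notMem fun x hx => lt_irrefl x (mem_iInter.mp hx x)
  simpa [hempty] using
    tendsto_setIntegral_of_antitone (fun _ => measurableSet_Ioi)
      (fun _ _ h => Ioi_subset_Ioi h) ⟨a, hf⟩

section LogWeight
variable {q : ℝ → ℝ}

theorem memLp_mul_log (hm : Measurable q)
    (hq : IntegrableOn (fun x => q x ^ 2 * log (2 + x) ^ 2) (Ioi 0)) :
    MemLp (fun x => q x * log (2 + x)) 2 (volume.restrict (Ioi 0)) := by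
  refine (memLp_two_iff_integrable_sq ?_).mpr ?_
  · exact (hm.mul (measurable_log.comp (measurable_const_add 2))).aestronglyMeasurable
  · simpa only [mul_pow, IntegrableOn] using hq

theorem sq_integral_Ioc_abs_le
    (hf : MemLp (fun x => q x * log (2 + x)) 2 (volume.restrict (Ioi 0)))
    {a b w₀ : ℝ} (ha : 0 ≤ a) (hab : a ≤ b) (hw₀ : 0 < w₀) (hw₀a : w₀ ≤ log (2 + a)) :
    (∫ x in Ioc a b, |q x|) ^ 2 ≤ b / w₀ ^ 2 * ∫ x in Ioi a, (q x * log (2 + x)) ^ 2 := by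
  have hIoc : Ioc a b ⊆ Ioi 0 := fun x hx => ha.trans_lt hx.1
  have hweight : ∀ᵐ x ∂volume.restrict (Ioc a b), w₀ ≤ log (2 + x) :=
    ae_restrict_of_forall_mem measurableSet_Ioc fun x hx =>
      hw₀a.trans (log_le_log (by linarith) (by linarith [hx.1]))
  have h := sq_integral_abs_le_of_le_weight hw₀ hweight
    (hf.mono_measure (Measure.restrict_mono hIoc le_rfl))
  rw [measureReal_restrict_apply_univ, Real.volume_real_Ioc_of_le hab] at h
  refine h.trans (mul_le_mul ?_ ?_ (setIntegral_nonneg measurableSet_Ioc fun _ _ => sq_nonneg _)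
    (div_nonneg (ha.trans hab) (sq_nonneg _)))
  · gcongr; linarith
  · exact setIntegral_mono_set
      (IntegrableOn.mono_set hf.integrable_sq (Ioi_subset_Ioi ha))
      (ae_of_all _ fun _ => sq_nonneg _)
      Ioc_subset_Ioi_self.eventuallyLE

theorem integrableOn_Ioc_zero (hm : Measurable q)
    (hf : MemLp (fun x => q x * log (2 + x)) 2 (volume.restrict (Ioi 0))) (b : ℝ) :
    IntegrableOn q (Ioc 0 b) :=
  integrable_of_memLp_mul_of_le hm.aestronglyMeasurable (log_pos one_lt_two)
    (ae_restrict_of_forall_mem measurableSet_Ioc fun x hx =>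
      log_le_log two_pos (by linarith [hx.1]))
    (hf.mono_measure (Measure.restrict_mono Ioc_subset_Ioi_self le_rfl))

theorem log_sq_div_mul_sq_integral_le (hm : Measurable q)
    (hf : MemLp (fun x => q x * log (2 + x)) 2 (volume.restrict (Ioi 0))) {C s : ℝ} (hs : 1 < s)
    (hsC : s ≤ C * s ^ 2) :
    log (s ^ 2) ^ 2 / s ^ 2 * (∫ u in (0 : ℝ)..C * s ^ 2, |q u|) ^ 2 ≤
      8 * ((∫ x in Ioi 0, (q x * log (2 + x)) ^ 2) / log 2 ^ 2) * (log s ^ 2 / s) +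
        8 * C * ∫ x in Ioi s, (q x * log (2 + x)) ^ 2 := by
  set X := ∫ x in Ioc 0 s, |q x|
  set Y := ∫ x in Ioc s (C * s ^ 2), |q x|
  have hs0 : 0 < s := one_pos.trans hs
  have hlog : 0 < log s := log_pos hs
  have hsplit : ∫ u in (0 : ℝ)..C * s ^ 2, |q u| = X + Y := by
    have hint : IntegrableOn (fun x => |q x|) (Ioc 0 (C * s ^ 2)) :=
      (integrableOn_Ioc_zero hm hf _).abs
    rw [intervalIntegral.integral_of_le (hs0.le.trans hsC), ← Ioc_union_Ioc_eq_Ioc hs0.le hsC,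
      setIntegral_union (Ioc_disjoint_Ioc_of_le le_rfl) measurableSet_Ioc
        (hint.mono_set (Ioc_subset_Ioc_right hsC)) (hint.mono_set (Ioc_subset_Ioc_left hs0.le))]
  have hX : X ^ 2 ≤ s / log 2 ^ 2 * ∫ x in Ioi 0, (q x * log (2 + x)) ^ 2 := by
    simpa using sq_integral_Ioc_abs_le hf le_rfl hs0.le (log_pos one_lt_two) (by simp)
  have hY : Y ^ 2 ≤ C * s ^ 2 / log s ^ 2 * ∫ x in Ioi s, (q x * log (2 + x)) ^ 2 :=
    sq_integral_Ioc_abs_le hf hs0.le hsC hlog (log_le_log hs0 (by linarith))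
  rw [hsplit, log_pow, Nat.cast_ofNat]
  calc (2 * log s) ^ 2 / s ^ 2 * (X + Y) ^ 2
        ≤ (2 * log s) ^ 2 / s ^ 2 * (2 * X ^ 2 + 2 * Y ^ 2) := by
        gcongr; nlinarith [sq_nonneg (X - Y)]
    _ ≤ (2 * log s) ^ 2 / s ^ 2 * (2 * (s / log 2 ^ 2 * ∫ x in Ioi 0, (q x * log (2 + x)) ^ 2) +
          2 * (C * s ^ 2 / log s ^ 2 * ∫ x in Ioi s, (q x * log (2 + x)) ^ 2)) := by gcongr
    _ = _ := by field_simp; ring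

theorem tendsto_log_sq_div_mul_sq_integral (hm : Measurable q)
    (hf : MemLp (fun x => q x * log (2 + x)) 2 (volume.restrict (Ioi 0))) {C : ℝ} (hC : 0 < C) :
    Tendsto (fun T => log T ^ 2 / T * (∫ u in (0 : ℝ)..C * T, |q u|) ^ 2) atTop (𝓝 0) := by
  have hlog : Tendsto (fun s => log s ^ 2 / s) atTop (𝓝 0) := by
    simpa using tendsto_pow_log_div_mul_add_atTop 1 0 2 one_ne_zero
  have htail := tendsto_setIntegral_Ioi_atTop hf.integrable_sq
  have hbound := (hlog.const_mul (8 * ((∫ x in Ioi 0, (q x * log (2 + x)) ^ 2) / log 2 ^ 2))).add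
    (htail.const_mul (8 * C))
  rw [mul_zero, mul_zero, add_zero] at hbound
  have hs : Tendsto (fun s => log (s ^ 2) ^ 2 / s ^ 2 * (∫ u in (0 : ℝ)..C * s ^ 2, |q u|) ^ 2)
      atTop (𝓝 0) := by
    refine squeeze_zero' (Eventually.of_forall fun s => by positivity) ?_ hbound
    filter_upwards [eventually_gt_atTop 1, eventually_ge_atTop C⁻¹] with s hs hsC
    refine log_sq_div_mul_sq_integral_le hm hf hs ?_
    have : 1 ≤ C * s := by rwa [inv_le_iff_one_le_mul₀' hC] at hsC
    nlinarith
  refine (hs.comp tendsto_sqrt_atTop).congr' ?_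
  filter_upwards [eventually_ge_atTop 0] with T hT
  simp only [Function.comp_apply, sq_sqrt hT]

end LogWeight

theorem setIntegral_Ioc_sq_inv_mul_le {P : ℝ → ℝ} {a b : ℝ} (ha : 0 < a) (hb : 0 ≤ b)
    (hP₀ : ∀ x ∈ Ioc a b, 0 ≤ P x) (hPb : ∀ x ∈ Ioc a b, P x ≤ P b) :
    ∫ x in Ioc a b, (x⁻¹ * P x) ^ 2 ≤ b * (a⁻¹ * P b) ^ 2 := by
  calc ∫ x in Ioc a b, (x⁻¹ * P x) ^ 2 ≤ ∫ _ in Ioc a b, (a⁻¹ * P b) ^ 2 := by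
        refine integral_mono_of_nonneg (ae_of_all _ fun _ => sq_nonneg _)
          (integrableOn_const measure_Ioc_lt_top.ne)
          (ae_restrict_of_forall_mem measurableSet_Ioc fun x hx => ?_)
        have hx₀ : 0 < x := ha.trans hx.1
        have hPx := hP₀ x hx
        dsimp only
        gcongr
        exacts [hx.1.le, hPb x hx]
    _ ≤ b * (a⁻¹ * P b) ^ 2 := by
        rw [setIntegral_const, smul_eq_mul, Real.volume_real_Ioc]
        gcongr
        exact max_le (by linarith) hb

/-- If `q(x) ln(2+x) ∈ L²(0,∞)` and `q₁(x) = x⁻¹ ∫_0^x |q|`, then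
`(ln²T)/T · (∫_0^{CT} |q|)² → 0` and `ln²T · ∫_{cT}^{CT} q₁² → 0` as `T → ∞`. -/
theorem cesaro_average_estimate (q : ℝ → ℝ) (hm : Measurable q)
    (hq : IntegrableOn (fun x => q x ^ 2 * Real.log (2 + x) ^ 2)
      (Set.Ioi 0) volume)
    (q₁ : ℝ → ℝ) (hq₁ : ∀ x : ℝ, q₁ x = x⁻¹ * ∫ u in (0:ℝ)..x, |q u|)
    (c C : ℝ) (hc : 0 < c) (hC : 0 < C) :
    Tendsto (fun T : ℝ =>
        Real.log T ^ 2 / T * (∫ u in (0:ℝ)..(C * T), |q u|) ^ 2)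
      atTop (nhds 0) ∧
    Tendsto (fun T : ℝ =>
        Real.log T ^ 2 * ∫ x in Set.Ioc (c * T) (C * T), q₁ x ^ 2)
      atTop (nhds 0) := by
  obtain rfl : q₁ = fun x => x⁻¹ * ∫ u in (0 : ℝ)..x, |q u| := funext hq₁
  have hf := memLp_mul_log hm hq
  have hmain := tendsto_log_sq_div_mul_sq_integral hm hf hC
  refine ⟨hmain, squeeze_zero' (Eventually.of_forall fun T => ?_) ?_
    (by simpa using hmain.const_mul (C / c ^ 2))⟩
  · exact mul_nonneg (sq_nonneg _) (setIntegral_nonneg measurableSet_Ioc fun _ _ => sq_nonneg _)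
  filter_upwards [eventually_gt_atTop 0] with T hT
  have hint : IntervalIntegrable (fun u => |q u|) volume 0 (C * T) :=
    (intervalIntegrable_iff_integrableOn_Ioc_of_le (by positivity)).mpr
      (integrableOn_Ioc_zero hm hf _).abs
  have hbound := setIntegral_Ioc_sq_inv_mul_le (P := fun x => ∫ u in (0 : ℝ)..x, |q u|)
    (mul_pos hc hT) (by positivity)
    (fun x hx => intervalIntegral.integral_nonneg (mul_pos hc hT |>.trans hx.1).le
      fun _ _ => abs_nonneg _)
    (fun x hx => intervalIntegral.integral_mono_interval le_rfl (mul_pos hc hT |>.trans hx.1).le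
      hx.2 (ae_of_all _ fun _ => abs_nonneg _) hint)
  calc log T ^ 2 * ∫ x in Ioc (c * T) (C * T), (x⁻¹ * ∫ u in (0 : ℝ)..x, |q u|) ^ 2
      ≤ log T ^ 2 * (C * T * ((c * T)⁻¹ * ∫ u in (0 : ℝ)..C * T, |q u|) ^ 2) :=
        mul_le_mul_of_nonneg_left hbound (sq_nonneg _)
    _ = C / c ^ 2 * (log T ^ 2 / T * (∫ u in (0 : ℝ)..C * T, |q u|) ^ 2) := by
        field_simp
end
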